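/- Let ρ, θ > 0 and set φ = log(ρ/θ^{3/2}) + 5/2, w = log θ. Then with M₁₁ = ρθ, M₁₂ = (5/2)ρθ², M₂₂ = θ²(1 + (35/4)ρθ), the flux identities M₁₁∇φ + M₁₂ e^{−w}∇w = ∇(ρθ) and M₁₂∇φ + M₂₂ e^{−w}∇w = ∇(θ + (5/2)ρθ²) hold for differentiable positive fields ρ, θ on an open set of ℝ³. -/

import Mathlib

/-!
Both identities are the chain rule followed by algebra. With `∇φ = ∇ρ/ρ - (3/2)∇θ/θ` and
`e^{-w}∇w = ∇θ/θ²`, the left-hand sides become combinations of `∇ρ` and `∇θ` whose coefficients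
collapse to those of `∇(ρθ) = θ∇ρ + ρ∇θ` and of `∇(θ + (5/2)ρθ²) = (5/2)θ²∇ρ + (1 + 5ρθ)∇θ`.
-/

open Real InnerProductSpace

section GradientCalculus

variable {F : Type*} [NormedAddCommGroup F] [InnerProductSpace ℝ F] [CompleteSpace F]
  {f g : F → ℝ} {f' g' x : F}

theorem HasGradientAt.add (hf : HasGradientAt f f' x) (hg : HasGradientAt g g' x) :
    HasGradientAt (fun y => f y + g y) (f' + g') x := by
  rw [hasGradientAt_iff_hasFDerivAt, map_add]
  exact HasFDerivAt.add hf hg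

theorem HasGradientAt.sub (hf : HasGradientAt f f' x) (hg : HasGradientAt g g' x) :
    HasGradientAt (fun y => f y - g y) (f' - g') x := by
  rw [hasGradientAt_iff_hasFDerivAt, map_sub]
  exact HasFDerivAt.sub hf hg

theorem HasGradientAt.add_const (hf : HasGradientAt f f' x) (c : ℝ) :
    HasGradientAt (fun y => f y + c) f' x :=
  HasFDerivAt.add_const c hf

theorem HasGradientAt.const_mul (hf : HasGradientAt f f' x) (c : ℝ) :
    HasGradientAt (fun y => c * f y) (c • f') x := by
  rw [hasGradientAt_iff_hasFDerivAt, map_smul]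
  exact HasFDerivAt.const_mul hf c

theorem HasGradientAt.mul (hf : HasGradientAt f f' x) (hg : HasGradientAt g g' x) :
    HasGradientAt (fun y => f y * g y) (f x • g' + g x • f') x := by
  rw [hasGradientAt_iff_hasFDerivAt, map_add, map_smul, map_smul]
  exact HasFDerivAt.mul hf hg

theorem HasGradientAt.pow (hf : HasGradientAt f f' x) (n : ℕ) :
    HasGradientAt (fun y => f y ^ n) ((n * f x ^ (n - 1)) • f') x := by
  rw [hasGradientAt_iff_hasFDerivAt, map_smul]
  simpa only [nsmul_eq_mul] using HasFDerivAt.pow hf n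

theorem HasGradientAt.log (hf : HasGradientAt f f' x) (hx : f x ≠ 0) :
    HasGradientAt (fun y => Real.log (f y)) ((f x)⁻¹ • f') x := by
  rw [hasGradientAt_iff_hasFDerivAt, map_smul]
  exact HasFDerivAt.log hf hx

variable {ρ θ : F → ℝ} {ρ' θ' : F}

theorem HasGradientAt.log_div_rpow_add_const (hρ : HasGradientAt ρ ρ' x)
    (hθ : HasGradientAt θ θ' x) (hρx : 0 < ρ x) (hθx : 0 < θ x) (a c : ℝ) :
    HasGradientAt (fun y => Real.log (ρ y / θ y ^ a) + c)
      ((ρ x)⁻¹ • ρ' - (a * (θ x)⁻¹) • θ') x := by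
  have hsplit : HasGradientAt (fun y => Real.log (ρ y) - a * Real.log (θ y) + c)
      ((ρ x)⁻¹ • ρ' - (a * (θ x)⁻¹) • θ') x := by
    rw [mul_smul]
    exact ((hρ.log hρx.ne').sub ((hθ.log hθx.ne').const_mul a)).add_const c
  refine hsplit.congr_of_eventuallyEq ?_
  filter_upwards [hρ.continuousAt.eventually (eventually_gt_nhds hρx),
    hθ.continuousAt.eventually (eventually_gt_nhds hθx)] with y hρy hθy
  rw [Real.log_div hρy.ne' (rpow_pos_of_pos hθy _).ne', Real.log_rpow hθy]

theorem HasGradientAt.add_const_mul_mul_sq (hρ : HasGradientAt ρ ρ' x)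
    (hθ : HasGradientAt θ θ' x) (c : ℝ) :
    HasGradientAt (fun y => θ y + c * ρ y * θ y ^ 2)
      ((c * θ x ^ 2) • ρ' + (1 + 2 * c * ρ x * θ x) • θ') x := by
  convert hθ.add ((hρ.const_mul c).mul (hθ.pow 2)) using 1
  match_scalars <;> push_cast <;> ring

end GradientCalculus

theorem flux_identities_general (U : Set (EuclideanSpace ℝ (Fin 3)))
    (ρ θ : EuclideanSpace ℝ (Fin 3) → ℝ)
    (hρpos : ∀ x ∈ U, 0 < ρ x) (hθpos : ∀ x ∈ U, 0 < θ x)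
    (hρ : ∀ x ∈ U, DifferentiableAt ℝ ρ x) (hθ : ∀ x ∈ U, DifferentiableAt ℝ θ x) :
    ∀ x ∈ U,
      (ρ x * θ x) •
          gradient (fun y => Real.log (ρ y / θ y ^ ((3:ℝ)/2)) + 5/2) x
        + ((5/2) * ρ x * θ x ^ 2 * Real.exp (-Real.log (θ x))) •
          gradient (fun y => Real.log (θ y)) x
        = gradient (fun y => ρ y * θ y) x ∧
      ((5/2) * ρ x * θ x ^ 2) •
          gradient (fun y => Real.log (ρ y / θ y ^ ((3:ℝ)/2)) + 5/2) x
        + (θ x ^ 2 * (1 + (35/4) * ρ x * θ x) * Real.exp (-Real.log (θ x))) •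
          gradient (fun y => Real.log (θ y)) x
        = gradient (fun y => θ y + (5/2) * ρ y * θ y ^ 2) x := by
  intro x hx
  have hρx := (hρ x hx).hasGradientAt
  have hθx := (hθ x hx).hasGradientAt
  have hρ0 := hρpos x hx
  have hθ0 := hθpos x hx
  rw [(hρx.log_div_rpow_add_const hθx hρ0 hθ0 _ _).gradient,
    (hθx.log hθ0.ne').gradient, (hρx.mul hθx).gradient,
    (hρx.add_const_mul_mul_sq hθx _).gradient, exp_neg, exp_log hθ0]
  have hρne := hρ0.ne'
  constructor <;> match_scalars <;> field_simp <;> ring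

/-- Flux identities: with entropy variables `φ = log(ρ/θ^{3/2}) + 5/2`, `w = log θ`
and Onsager coefficients `M₁₁ = ρθ`, `M₁₂ = (5/2)ρθ²`, `M₂₂ = θ²(1 + (35/4)ρθ)`,
one has `M₁₁∇φ + M₁₂ e^{−w}∇w = ∇(ρθ)` and
`M₁₂∇φ + M₂₂ e^{−w}∇w = ∇(θ + (5/2)ρθ²)`. -/
theorem flux_identities (U : Set (EuclideanSpace ℝ (Fin 3))) (hU : IsOpen U)
    (ρ θ : EuclideanSpace ℝ (Fin 3) → ℝ)
    (hρpos : ∀ x ∈ U, 0 < ρ x) (hθpos : ∀ x ∈ U, 0 < θ x)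
    (hρ : ∀ x ∈ U, DifferentiableAt ℝ ρ x) (hθ : ∀ x ∈ U, DifferentiableAt ℝ θ x) :
    ∀ x ∈ U,
      (ρ x * θ x) •
          gradient (fun y => Real.log (ρ y / θ y ^ ((3:ℝ)/2)) + 5/2) x
        + ((5/2) * ρ x * θ x ^ 2 * Real.exp (-Real.log (θ x))) •
          gradient (fun y => Real.log (θ y)) x
        = gradient (fun y => ρ y * θ y) x ∧
      ((5/2) * ρ x * θ x ^ 2) •
          gradient (fun y => Real.log (ρ y / θ y ^ ((3:ℝ)/2)) + 5/2) x
        + (θ x ^ 2 * (1 + (35/4) * ρ x * θ x) * Real.exp (-Real.log (θ x))) •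
          gradient (fun y => Real.log (θ y)) x
        = gradient (fun y => θ y + (5/2) * ρ y * θ y ^ 2) x :=
  flux_identities_general U ρ θ hρpos hθpos hρ hθ
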